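/- Let F ∈ K[x_0,…,x_n] be homogeneous and suppose the annihilator ideal F^⊥ ⊂ S = K[y_0,…,y_n] is generated in degrees ≤ d. If Γ ⊂ P^n is a finite (zero-dimensional) closed subscheme whose saturated homogeneous ideal I_Γ is contained in F^⊥, then deg Γ ≥ (1/d) · dim_K(S/F^⊥). -/

import Mathlib

open MvPolynomial

/-- The differential operator on `MvPolynomial (Fin n) K` given by the monomial `y^s`:
the composition of the partial derivatives `∂_i` iterated `s i` times. -/
noncomputable def monOp {n : ℕ} (K : Type*) [CommSemiring K] (s : Fin n →₀ ℕ) :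
    MvPolynomial (Fin n) K →ₗ[K] MvPolynomial (Fin n) K :=
  (List.ofFn fun i : Fin n =>
    ((pderiv i).toLinearMap : MvPolynomial (Fin n) K →ₗ[K] MvPolynomial (Fin n) K) ^ (s i)).prod

/-- The apolarity action `g ∘ F` of `S = K[y_0,…,y_n]` on `T = K[x_0,…,x_n]`,
where `y_i` acts as `∂/∂x_i`. -/
noncomputable def apolarAct {n : ℕ} {K : Type*} [CommSemiring K]
    (g F : MvPolynomial (Fin n) K) : MvPolynomial (Fin n) K :=
  ∑ s ∈ g.support, coeff s g • (monOp K s F)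

/-- The annihilator `F^⊥ = {g : g ∘ F = 0}` of `F` under the apolarity action. -/
def perp {n : ℕ} {K : Type*} [CommSemiring K] (F : MvPolynomial (Fin n) K) :
    Set (MvPolynomial (Fin n) K) :=
  {g | apolarAct g F = 0}

/-- A homogeneous ideal: all homogeneous components of members belong to the ideal. -/
def HomogIdeal {n : ℕ} {K : Type*} [CommSemiring K]
    (I : Ideal (MvPolynomial (Fin n) K)) : Prop :=
  ∀ g ∈ I, ∀ t, homogeneousComponent t g ∈ I

/-- Saturation with respect to the irrelevant maximal ideal. -/
def SatIdeal {n : ℕ} {K : Type*} [CommSemiring K]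
    (I : Ideal (MvPolynomial (Fin n) K)) : Prop :=
  ∀ g, (∀ i, X i * g ∈ I) → g ∈ I

/-- An ideal generated by homogeneous elements of degrees `≤ d`. -/
def GenInDegLE {n : ℕ} {K : Type*} [CommSemiring K]
    (I : Ideal (MvPolynomial (Fin n) K)) (d : ℕ) : Prop :=
  ∃ G : Set (MvPolynomial (Fin n) K), I = Ideal.span G ∧
    ∀ g ∈ G, ∃ k ≤ d, g ∈ homogeneousSubmodule (Fin n) K k

/-- The Hilbert function of `S/I` in degree `t`: the `K`-dimension of the degree-`t`
part of `S` modulo the degree-`t` part of `I`. -/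
noncomputable def hilb {n : ℕ} (K : Type*) [Field K]
    (I : Ideal (MvPolynomial (Fin n) K)) (t : ℕ) : ℕ :=
  Module.finrank K (↥(homogeneousSubmodule (Fin n) K t) ⧸
    (Submodule.comap (homogeneousSubmodule (Fin n) K t).subtype (I.restrictScalars K)))

/-- `Γ ⊆ Pⁿ⁻¹` defined by the saturated homogeneous ideal `I` is finite of degree `D`:
the Hilbert function is eventually the constant `D`. -/
def FiniteSchemeDeg {n : ℕ} (K : Type*) [Field K]
    (I : Ideal (MvPolynomial (Fin n) K)) (D : ℕ) : Prop :=
  ∃ N, ∀ t ≥ N, hilb K I t = D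

/-- The cactus rank: minimal degree of a finite subscheme apolar to `F`. -/
noncomputable def cactusRank {n : ℕ} {K : Type*} [Field K]
    (F : MvPolynomial (Fin n) K) : ℕ :=
  sInf {D | ∃ I : Ideal (MvPolynomial (Fin n) K), HomogIdeal I ∧ SatIdeal I ∧
    (↑I : Set (MvPolynomial (Fin n) K)) ⊆ perp F ∧ FiniteSchemeDeg K I D}

/-- The (homogeneous) vanishing ideal of the point set `{[p 0],…,[p (r-1)]} ⊆ Pⁿ⁻¹`:
polynomials vanishing on the affine cone over the points. -/
def pointsIdeal {n r : ℕ} {K : Type*} [CommSemiring K] (p : Fin r → Fin n → K) :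
    Set (MvPolynomial (Fin n) K) :=
  {g | ∀ j, ∀ c : K, eval (c • p j) g = 0}

/-- The rank of `F`: the minimal cardinality of a set of (distinct) points of `Pⁿ⁻¹`
whose vanishing ideal is contained in `F^⊥`. -/
noncomputable def symRank {n : ℕ} {K : Type*} [Field K]
    (F : MvPolynomial (Fin n) K) : ℕ :=
  sInf {r | ∃ p : Fin r → Fin n → K, (∀ j, p j ≠ 0) ∧
    (∀ j k, j ≠ k → ∀ c : K, p j ≠ c • p k) ∧ pointsIdeal p ⊆ perp F}

section ChunkA
variable {n : ℕ} {K : Type*} [CommSemiring K]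

lemma degree_single_one_add {v : Fin n →₀ ℕ} {i : Fin n} (h0 : v i ≠ 0) :
    (v - Finsupp.single i 1).degree + 1 = v.degree := by
  have h1 : (Finsupp.single i 1 : Fin n →₀ ℕ) ≤ v := by
    intro j
    rcases eq_or_ne j i with rfl | hji
    · simpa [Finsupp.single_apply] using Nat.one_le_iff_ne_zero.mpr h0
    · simp [Finsupp.single_apply, hji.symm]
  have hv : (v - Finsupp.single i 1) + Finsupp.single i 1 = v := tsub_add_cancel_of_le h1
  have hs : (Finsupp.single i 1 : Fin n →₀ ℕ).degree = 1 := by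
    exact Finsupp.degree_single _ _
  calc (v - Finsupp.single i 1).degree + 1
      = (v - Finsupp.single i 1).degree + (Finsupp.single i 1 : Fin n →₀ ℕ).degree := by rw [hs]
    _ = v.degree := by
        simp only [Finsupp.degree_eq_weight_one]
        rw [← map_add, hv]

lemma pderiv_mem_homog {F : MvPolynomial (Fin n) K} {e : ℕ} (hF : F.IsHomogeneous e)
    (i : Fin n) : (pderiv i F) ∈ homogeneousSubmodule (Fin n) K (e - 1) := by
  have hrw : pderiv i F = ∑ v ∈ F.support, pderiv i (monomial v (coeff v F)) := by
    rw [← map_sum, support_sum_monomial_coeff]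
  rw [hrw]
  refine Submodule.sum_mem _ fun v hv => ?_
  rw [pderiv_monomial]
  by_cases h0 : v i = 0
  · simp [h0]
  · rw [mem_homogeneousSubmodule]
    apply isHomogeneous_monomial
    have hdeg : v.degree = e := by
      rw [Finsupp.degree_eq_weight_one]
      exact hF (MvPolynomial.mem_support_iff.mp hv)
    have := degree_single_one_add h0
    omega

lemma pderiv_eq_zero_of_homog_zero {F : MvPolynomial (Fin n) K} (hF : F.IsHomogeneous 0)
    (i : Fin n) : pderiv i F = 0 := by
  have hrw : pderiv i F = ∑ v ∈ F.support, pderiv i (monomial v (coeff v F)) := by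
    rw [← map_sum, support_sum_monomial_coeff]
  rw [hrw]
  refine Finset.sum_eq_zero fun v hv => ?_
  have hdeg : v.degree = 0 := by
    rw [Finsupp.degree_eq_weight_one]
    exact hF (MvPolynomial.mem_support_iff.mp hv)
  have hv0 : v = 0 := (Finsupp.degree_eq_zero_iff v).mp hdeg
  rw [pderiv_monomial]
  simp [hv0]

/-- key cancellation property of a linear operator -/
def HomOK (φ : MvPolynomial (Fin n) K →ₗ[K] MvPolynomial (Fin n) K) (k : ℕ) : Prop :=
  ∀ (e : ℕ) (F : MvPolynomial (Fin n) K), F.IsHomogeneous e →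
    (φ F).IsHomogeneous (e - k) ∧ (e < k → φ F = 0)

lemma homOK_pderiv (i : Fin n) : HomOK ((pderiv i).toLinearMap :
    MvPolynomial (Fin n) K →ₗ[K] MvPolynomial (Fin n) K) 1 := by
  intro e F hF
  constructor
  · exact (mem_homogeneousSubmodule _ _).mp (pderiv_mem_homog hF i)
  · intro he
    have he0 : e = 0 := by omega
    subst he0
    exact pderiv_eq_zero_of_homog_zero hF i

lemma HomOK.mul {φ ψ : MvPolynomial (Fin n) K →ₗ[K] MvPolynomial (Fin n) K} {k l : ℕ}
    (hφ : HomOK φ k) (hψ : HomOK ψ l) : HomOK (φ * ψ) (k + l) := by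
  intro e F hF
  have h1 := hψ e F hF
  have h2 := hφ (e - l) (ψ F) h1.1
  constructor
  · have : e - l - k = e - (k + l) := by omega
    rw [Module.End.mul_apply]
    rw [this] at h2
    exact h2.1
  · intro he
    rw [Module.End.mul_apply]
    by_cases hel : e < l
    · rw [h1.2 hel, map_zero]
    · exact h2.2 (by omega)

lemma homOK_one : HomOK (1 : MvPolynomial (Fin n) K →ₗ[K] MvPolynomial (Fin n) K) 0 := by
  intro e F hF
  refine ⟨by simpa using hF, by omega⟩

lemma homOK_pow (i : Fin n) (m : ℕ) : HomOK (((pderiv i).toLinearMap :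
    MvPolynomial (Fin n) K →ₗ[K] MvPolynomial (Fin n) K) ^ m) m := by
  induction m with
  | zero => exact homOK_one
  | succ m ih =>
      have := (homOK_pderiv (K := K) i).mul ih
      rw [← pow_succ'] at this
      exact Nat.add_comm 1 m ▸ this

lemma homOK_list : ∀ (L : List (MvPolynomial (Fin n) K →ₗ[K] MvPolynomial (Fin n) K))
    (ks : List ℕ), List.Forall₂ HomOK L ks → HomOK L.prod ks.sum := by
  intro L ks h
  induction h with
  | nil => simpa using homOK_one
  | cons h _ ih =>
      simpa using h.mul ih

lemma homOK_monOp (s : Fin n →₀ ℕ) : HomOK (monOp K s) s.degree := by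
  have h : List.Forall₂ HomOK
      (List.ofFn fun i : Fin n => ((pderiv i).toLinearMap :
        MvPolynomial (Fin n) K →ₗ[K] MvPolynomial (Fin n) K) ^ (s i))
      (List.ofFn fun i : Fin n => s i) := by
    rw [List.forall₂_iff_get]
    refine ⟨by simp, fun i h1 h2 => ?_⟩
    simp only [List.get_eq_getElem, List.getElem_ofFn]
    exact homOK_pow _ _
  have := homOK_list _ _ h
  have hsum : (List.ofFn fun i : Fin n => s i).sum = s.degree := by
    rw [List.sum_ofFn, Finsupp.degree]
    exact (Finset.sum_subset (Finset.subset_univ _) (by simp)).symm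
  rw [hsum] at this
  exact this

lemma monOp_eq_zero {F : MvPolynomial (Fin n) K} {e : ℕ} (hF : F.IsHomogeneous e)
    {s : Fin n →₀ ℕ} (hs : e < s.degree) : monOp K s F = 0 :=
  ((homOK_monOp s) e F hF).2 hs

lemma mem_perp_of_isHomogeneous_gt {F : MvPolynomial (Fin n) K} {e : ℕ}
    (hF : F.IsHomogeneous e) {t : ℕ} (ht : e < t) {g : MvPolynomial (Fin n) K}
    (hg : g.IsHomogeneous t) : g ∈ perp F := by
  show apolarAct g F = 0
  unfold apolarAct
  refine Finset.sum_eq_zero fun v hv => ?_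
  have hdeg : v.degree = t := by
    rw [Finsupp.degree_eq_weight_one]
    exact hg (MvPolynomial.mem_support_iff.mp hv)
  rw [monOp_eq_zero hF (by omega), smul_zero]

end ChunkA


section ChunkB
variable {n : ℕ} {K : Type*} [CommSemiring K]

lemma mul_comp_mem_span {G : Set (MvPolynomial (Fin n) K)} {c g : MvPolynomial (Fin n) K}
    (hg : ∀ j, homogeneousComponent j g ∈ Ideal.span G) (t : ℕ) :
    homogeneousComponent t (c * g) ∈ Ideal.span G := by
  have hc : c = ∑ i ∈ Finset.range (c.totalDegree + 1), homogeneousComponent i c :=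
    (sum_homogeneousComponent c).symm
  have hgg : g = ∑ j ∈ Finset.range (g.totalDegree + 1), homogeneousComponent j g :=
    (sum_homogeneousComponent g).symm
  have key : homogeneousComponent t (c * g)
      = ∑ i ∈ Finset.range (c.totalDegree + 1), ∑ j ∈ Finset.range (g.totalDegree + 1),
          homogeneousComponent t (homogeneousComponent i c * homogeneousComponent j g) := by
    conv_lhs => rw [hc, hgg]
    rw [Finset.sum_mul_sum, map_sum]
    exact Finset.sum_congr rfl fun i _ => map_sum _ _ _
  rw [key]
  refine Ideal.sum_mem _ fun i _ => Ideal.sum_mem _ fun j _ => ?_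
  have hmem : homogeneousComponent i c * homogeneousComponent j g ∈
      homogeneousSubmodule (Fin n) K (i + j) := by
    rw [mem_homogeneousSubmodule]
    exact (homogeneousComponent_isHomogeneous i c).mul (homogeneousComponent_isHomogeneous j g)
  rw [homogeneousComponent_of_mem hmem]
  split
  · exact Ideal.mul_mem_left _ _ (hg j)
  · exact Ideal.zero_mem _

lemma homogIdeal_span (G : Set (MvPolynomial (Fin n) K))
    (hG : ∀ g ∈ G, ∃ k, g ∈ homogeneousSubmodule (Fin n) K k) :
    HomogIdeal (Ideal.span G) := by
  set J : Ideal (MvPolynomial (Fin n) K) :=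
    { carrier := {g | ∀ t, homogeneousComponent t g ∈ Ideal.span G}
      zero_mem' := by intro t; rw [map_zero]; exact Ideal.zero_mem _
      add_mem' := by
        intro a b ha hb t
        rw [map_add]
        exact Ideal.add_mem _ (ha t) (hb t)
      smul_mem' := by
        intro c x hx t
        rw [smul_eq_mul]
        exact mul_comp_mem_span hx t } with hJdef
  have hle : Ideal.span G ≤ J := by
    rw [Ideal.span_le]
    intro g hg
    obtain ⟨k, hk⟩ := hG g hg
    intro t
    rw [homogeneousComponent_of_mem hk]
    split
    · exact Ideal.subset_span hg
    · exact Ideal.zero_mem _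
  intro g hg t
  exact hle hg t

end ChunkB

section ChunkC
variable {n : ℕ} {K : Type*} [Field K]

instance homog_fd (t : ℕ) : FiniteDimensional K (homogeneousSubmodule (Fin n) K t) := by
  have hle : homogeneousSubmodule (Fin n) K t ≤ restrictTotalDegree (Fin n) K t := by
    intro p hp
    rw [mem_restrictTotalDegree]
    exact ((mem_homogeneousSubmodule t p).mp hp).totalDegree_le
  exact Submodule.finiteDimensional_of_le hle

noncomputable def degQuot (J : Ideal (MvPolynomial (Fin n) K)) (t : ℕ) :=
  (↥(homogeneousSubmodule (Fin n) K t) ⧸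
    (Submodule.comap (homogeneousSubmodule (Fin n) K t).subtype (J.restrictScalars K)))

noncomputable instance (J : Ideal (MvPolynomial (Fin n) K)) (t : ℕ) :
    AddCommGroup (degQuot J t) := by unfold degQuot; infer_instance

noncomputable instance (J : Ideal (MvPolynomial (Fin n) K)) (t : ℕ) :
    Module K (degQuot J t) := by unfold degQuot; infer_instance

instance (J : Ideal (MvPolynomial (Fin n) K)) (t : ℕ) :
    FiniteDimensional K (degQuot J t) := by unfold degQuot; infer_instance

lemma hilb_eq_finrank_degQuot (J : Ideal (MvPolynomial (Fin n) K)) (t : ℕ) :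
    hilb K J t = Module.finrank K (degQuot J t) := rfl

noncomputable def degQuotMk (J : Ideal (MvPolynomial (Fin n) K)) (t : ℕ) :
    MvPolynomial (Fin n) K →ₗ[K] degQuot J t :=
  (Submodule.mkQ _) ∘ₗ (LinearMap.codRestrict (homogeneousSubmodule (Fin n) K t)
    (homogeneousComponent t)
    (fun g => (mem_homogeneousSubmodule _ _).mpr (homogeneousComponent_isHomogeneous _ g)))

lemma degQuotMk_apply (J : Ideal (MvPolynomial (Fin n) K)) (t : ℕ) (g : MvPolynomial (Fin n) K) :
    degQuotMk J t g = Submodule.Quotient.mk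
      ⟨homogeneousComponent t g, (mem_homogeneousSubmodule _ _).mpr
        (homogeneousComponent_isHomogeneous _ g)⟩ := rfl

lemma degQuotMk_eq_zero_iff (J : Ideal (MvPolynomial (Fin n) K)) (t : ℕ)
    (g : MvPolynomial (Fin n) K) :
    degQuotMk J t g = 0 ↔ homogeneousComponent t g ∈ J := by
  rw [degQuotMk_apply]
  change Submodule.Quotient.mk (p := Submodule.comap (homogeneousSubmodule (Fin n) K t).subtype
    (J.restrictScalars K)) _ = 0 ↔ _
  rw [Submodule.Quotient.mk_eq_zero]
  simp [Submodule.mem_comap]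

lemma finrank_quotient_eq_sum_hilb (J : Ideal (MvPolynomial (Fin n) K))
    (hJ : HomogIdeal J) (e : ℕ)
    (hhigh : ∀ t g, e < t → g ∈ homogeneousSubmodule (Fin n) K t → g ∈ J) :
    Module.finrank K (MvPolynomial (Fin n) K ⧸ J) = ∑ t ∈ Finset.range (e+1), hilb K J t := by
  classical
  set Φ : MvPolynomial (Fin n) K →ₗ[K] ((t : Fin (e+1)) → degQuot J (t : ℕ)) :=
    LinearMap.pi (fun t : Fin (e+1) => degQuotMk J (t : ℕ)) with hΦdef
  have hΦapp : ∀ g (t : Fin (e+1)), Φ g t = degQuotMk J (t : ℕ) g := fun g t => rfl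
  have hker : LinearMap.ker Φ = J.restrictScalars K := by
    ext g
    simp only [LinearMap.mem_ker, Submodule.restrictScalars_mem]
    constructor
    · intro h
      have hcomp : ∀ t : Fin (e+1), homogeneousComponent (t : ℕ) g ∈ J := by
        intro t
        rw [← degQuotMk_eq_zero_iff J, ← hΦapp g t, h]
        rfl
      have hg : g = ∑ i ∈ Finset.range (g.totalDegree + 1), homogeneousComponent i g :=
        (sum_homogeneousComponent g).symm
      rw [hg]
      refine Ideal.sum_mem _ fun i _ => ?_
      by_cases hie : i ≤ e
      · exact hcomp ⟨i, by omega⟩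
      · exact hhigh i _ (by omega)
          ((mem_homogeneousSubmodule _ _).mpr (homogeneousComponent_isHomogeneous i g))
    · intro h
      funext t
      simp only [Pi.zero_apply]
      rw [hΦapp g t, degQuotMk_eq_zero_iff]
      exact hJ g h (t : ℕ)
  have hsurj : Function.Surjective Φ := by
    intro q
    have hy : ∀ t : Fin (e+1), ∃ y : ↥(homogeneousSubmodule (Fin n) K (t : ℕ)),
        Submodule.Quotient.mk y = q t := fun t => Submodule.Quotient.mk_surjective _ (q t)
    choose y hyq using hy
    refine ⟨∑ t : Fin (e+1), (y t : MvPolynomial (Fin n) K), ?_⟩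
    funext t
    rw [hΦapp _ t, degQuotMk_apply, ← hyq t]
    congr 1
    apply Subtype.ext
    show homogeneousComponent (t : ℕ) (∑ j : Fin (e+1), (y j : MvPolynomial (Fin n) K))
      = (y t : MvPolynomial (Fin n) K)
    rw [map_sum, Finset.sum_eq_single t]
    · rw [homogeneousComponent_of_mem (y t).2]
      simp
    · intro b _ hbt
      rw [homogeneousComponent_of_mem (y b).2]
      have hne : (t : ℕ) ≠ (b : ℕ) := fun hc => hbt (Fin.ext hc.symm)
      simp [hne]
    · intro h
      exact absurd (Finset.mem_univ t) h
  have he1 : Module.finrank K (MvPolynomial (Fin n) K ⧸ J) =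
      Module.finrank K (MvPolynomial (Fin n) K ⧸ J.restrictScalars K) :=
    (LinearEquiv.finrank_eq (Submodule.Quotient.restrictScalarsEquiv K J)).symm
  rw [he1, ← hker]
  have he2 := LinearEquiv.finrank_eq (LinearMap.quotKerEquivOfSurjective Φ hsurj)
  rw [he2, Module.finrank_pi_fintype K]
  rw [← Fin.sum_univ_eq_sum_range (fun t => hilb K J t) (e+1)]
  rfl

end ChunkC


section AssFinite
variable {R M : Type*} [CommRing R] [AddCommGroup M] [Module R M] [IsNoetherianRing R]

lemma assPrime_quotient_prime {p q : Ideal R} (hp : p.IsPrime)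
    (hq : IsAssociatedPrime q (R ⧸ p)) : q = p := by
  obtain ⟨hqp, x, hx⟩ := isAssociatedPrime_iff.mp hq
  obtain ⟨r, rfl⟩ := Ideal.Quotient.mk_surjective x
  by_cases hr : r ∈ p
  · exfalso
    have hx0 : (Ideal.Quotient.mk p r) = 0 := (Ideal.Quotient.eq_zero_iff_mem).mpr hr
    rw [hx0] at hx
    rw [Submodule.colon_singleton_zero] at hx
    exact hqp.ne_top hx
  · ext s
    rw [hx, Submodule.mem_colon_singleton, Submodule.mem_bot]
    have hsmul : s • (Ideal.Quotient.mk p r) = Ideal.Quotient.mk p (s * r) := rfl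
    rw [hsmul, Ideal.Quotient.eq_zero_iff_mem]
    constructor
    · intro h
      rcases hp.mem_or_mem h with h | h
      · exact h
      · exact absurd h hr
    · intro h
      exact Ideal.mul_mem_right _ _ h

lemma isAssociatedPrime_sub_or_quot {p : Ideal R} (N : Submodule R M)
    (hp : IsAssociatedPrime p M) :
    IsAssociatedPrime p N ∨ IsAssociatedPrime p (M ⧸ N) := by
  obtain ⟨hprime, x, hx⟩ := isAssociatedPrime_iff.mp hp
  have hpmem : ∀ s : R, s ∈ p ↔ s • x = 0 := fun s => by
    rw [hx, Submodule.mem_colon_singleton, Submodule.mem_bot]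
  by_cases hcase : ∃ r : R, r • x ∈ N ∧ r • x ≠ 0
  · left
    obtain ⟨r, hrN, hr0⟩ := hcase
    refine isAssociatedPrime_iff.mpr ⟨hprime, ⟨r • x, hrN⟩, ?_⟩
    have hrp : r ∉ p := fun hrp => hr0 ((hpmem r).mp hrp)
    ext s
    rw [Submodule.mem_colon_singleton, Submodule.mem_bot]
    have hcoe : s • (⟨r • x, hrN⟩ : N) = ⟨s • r • x, N.smul_mem s hrN⟩ := rfl
    rw [hcoe, Submodule.mk_eq_zero]
    constructor
    · intro hs
      rw [smul_comm, (hpmem s).mp hs, smul_zero]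
    · intro hs
      have h0 : (s * r) • x = 0 := by rw [mul_smul]; exact hs
      rcases hprime.mem_or_mem ((hpmem (s * r)).mpr h0) with h | h
      · exact h
      · exact absurd h hrp
  · right
    push_neg at hcase
    refine isAssociatedPrime_iff.mpr ⟨hprime, Submodule.Quotient.mk x, ?_⟩
    ext s
    rw [Submodule.mem_colon_singleton, Submodule.mem_bot, ← Submodule.Quotient.mk_smul,
      Submodule.Quotient.mk_eq_zero]
    constructor
    · intro hs
      rw [(hpmem s).mp hs]
      exact Submodule.zero_mem N
    · intro hs
      exact (hpmem s).mpr (hcase s hs)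

end AssFinite

section AssFinite2
variable {R M : Type*} [CommRing R] [AddCommGroup M] [Module R M]

theorem associatedPrimes_finite [IsNoetherianRing R] [Module.Finite R M] :
    (associatedPrimes R M).Finite := by
  classical
  haveI : IsNoetherian R M := inferInstance
  obtain ⟨N, hN, hmax⟩ := (set_has_maximal_iff_noetherian.mpr ‹IsNoetherian R M›)
    {N : Submodule R M | (associatedPrimes R ↥N).Finite}
    ⟨⊥, by
      rw [Set.mem_setOf_eq, associatedPrimes.eq_empty_of_subsingleton]
      exact Set.finite_empty⟩
  have hNtop : N = ⊤ := by
    by_contra hne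
    haveI : Nontrivial (M ⧸ N) := Submodule.Quotient.nontrivial_iff.mpr hne
    obtain ⟨p, hp⟩ := associatedPrimes.nonempty R (M ⧸ N)
    obtain ⟨hprime, xb, hxb⟩ := isAssociatedPrime_iff.mp hp
    obtain ⟨x, rfl⟩ := Submodule.Quotient.mk_surjective N xb
    have hxN : x ∉ N := by
      intro hxN
      apply hprime.ne_top
      rw [hxb, (Submodule.Quotient.mk_eq_zero N).mpr hxN, Submodule.colon_singleton_zero]
    set N' : Submodule R M := N ⊔ Submodule.span R {x} with hN'def
    have hNN' : N ≤ N' := le_sup_left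
    have hlt : N < N' := by
      rw [lt_iff_le_and_ne]
      refine ⟨hNN', fun h => hxN ?_⟩
      rw [h]
      exact Submodule.mem_sup_right (Submodule.mem_span_singleton_self x)
    -- the map N' → M/N
    set φ : ↥N' →ₗ[R] M ⧸ N := (N.mkQ) ∘ₗ N'.subtype with hφdef
    have hkerφ : LinearMap.ker φ = Submodule.comap N'.subtype N := by
      ext y
      simp [hφdef, Submodule.Quotient.mk_eq_zero]
    have hrangeφ : LinearMap.range φ = Submodule.span R {Submodule.Quotient.mk (p := N) x} := by
      apply le_antisymm
      · rintro _ ⟨⟨y, hy⟩, rfl⟩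
        rw [hN'def] at hy
        obtain ⟨a, ha, b, hb, rfl⟩ := Submodule.mem_sup.mp hy
        obtain ⟨r, rfl⟩ := Submodule.mem_span_singleton.mp hb
        have : φ ⟨a + r • x, hy⟩ = r • Submodule.Quotient.mk (p := N) x := by
          simp [hφdef, Submodule.Quotient.mk_eq_zero, (Submodule.Quotient.mk_eq_zero N).mpr ha]
        rw [this]
        exact Submodule.smul_mem _ _ (Submodule.mem_span_singleton_self _)
      · rw [Submodule.span_singleton_le_iff_mem]
        exact ⟨⟨x, Submodule.mem_sup_right (Submodule.mem_span_singleton_self x)⟩, rfl⟩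
    -- span of xb is iso to R/p
    have hspan_iso : (associatedPrimes R ↥(LinearMap.range φ)).Finite := by
      have hker2 : LinearMap.ker (LinearMap.toSpanSingleton R (M ⧸ N)
          (Submodule.Quotient.mk (p := N) x)) = p := by
        ext r
        rw [LinearMap.mem_ker, hxb, Submodule.mem_colon_singleton, Submodule.mem_bot]
        rfl
      have hre : LinearMap.range (LinearMap.toSpanSingleton R (M ⧸ N)
          (Submodule.Quotient.mk (p := N) x)) = LinearMap.range φ := by
        rw [hrangeφ]
        exact (LinearMap.span_singleton_eq_range R _ _).symm
      have e1 : (R ⧸ p) ≃ₗ[R] ↥(LinearMap.range φ) :=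
        (Submodule.quotEquivOfEq _ _ hker2.symm).trans
          ((LinearMap.quotKerEquivRange _).trans (LinearEquiv.ofEq _ _ hre))
      rw [← LinearEquiv.AssociatedPrimes.eq e1]
      apply Set.Finite.subset (Set.finite_singleton p)
      intro q hq
      exact assPrime_quotient_prime hprime hq
    have hN'fin : (associatedPrimes R ↥N').Finite := by
      apply Set.Finite.subset (Set.Finite.union hN hspan_iso)
      intro q hq
      rcases isAssociatedPrime_sub_or_quot (Submodule.comap N'.subtype N) hq with h | h
      · left
        exact ((Submodule.comapSubtypeEquivOfLe hNN').isAssociatedPrime_iff).mp h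
      · right
        exact (((Submodule.quotEquivOfEq _ _ hkerφ.symm).trans
          (LinearMap.quotKerEquivRange φ)).isAssociatedPrime_iff).mp h
    exact hmax N' hN'fin hlt
  subst hNtop
  exact (LinearEquiv.AssociatedPrimes.eq
    (Submodule.topEquiv : (⊤ : Submodule R M) ≃ₗ[R] M)) ▸ hN

end AssFinite2


lemma subspace_avoid {K M : Type*} [Field K] [Infinite K] [AddCommGroup M] [Module K M]
    (V : Submodule K M) (T : Finset (Submodule K M)) (hT : ∀ W ∈ T, ¬ V ≤ W) :
    ∃ v ∈ V, ∀ W ∈ T, v ∉ W := by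
  classical
  induction T using Finset.induction_on with
  | empty => exact ⟨0, V.zero_mem, by simp⟩
  | @insert W T hWT ih =>
      obtain ⟨v, hvV, hv⟩ := ih (fun W' hW' => hT W' (Finset.mem_insert_of_mem hW'))
      obtain ⟨u, huV, huW⟩ := SetLike.not_le_iff_exists.mp (hT W (Finset.mem_insert_self W T))
      have haux : ∀ W' : Submodule K M, v ∉ W' → ({c : K | v + c • u ∈ W'}).Subsingleton := by
        intro W' hvW' c hc c' hc'
        by_contra hne
        have hsub : (c - c') • u ∈ W' := by
          have := W'.sub_mem hc hc'
          simpa [smul_sub, sub_smul] using this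
        have huW' : u ∈ W' := by
          rwa [W'.smul_mem_iff (sub_ne_zero.mpr hne)] at hsub
        exact hvW' (by simpa using W'.sub_mem hc (W'.smul_mem c huW'))
      have hfin : ∀ W' ∈ insert W T, ({c : K | v + c • u ∈ W'}).Finite := by
        intro W' hW'
        rcases Finset.mem_insert.mp hW' with rfl | hW'T
        · by_cases hvW : v ∈ W'
          · refine Set.Finite.subset (Set.finite_singleton 0) ?_
            intro c hc
            simp only [Set.mem_setOf_eq] at hc
            have hcu : c • u ∈ W' := by simpa using W'.sub_mem hc hvW
            simp only [Set.mem_singleton_iff]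
            by_contra hc0
            exact huW ((W'.smul_mem_iff hc0).mp hcu)
          · exact Set.Subsingleton.finite (haux W' hvW)
        · exact Set.Subsingleton.finite (haux W' (hv W' hW'T))
      have hbad : (⋃ W' ∈ (insert W T : Finset (Submodule K M)),
          {c : K | v + c • u ∈ W'}).Finite :=
        Set.Finite.biUnion (Finset.finite_toSet _) (fun W' hW' => hfin W' hW')
      obtain ⟨c, hc⟩ := hbad.infinite_compl.nonempty
      refine ⟨v + c • u, V.add_mem hvV (V.smul_mem c huV), ?_⟩
      intro W' hW' hmem
      apply hc
      exact Set.mem_biUnion hW' hmem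



section RegularElement
variable {n : ℕ} {K : Type*} [Field K] [Infinite K]

lemma exists_regular_in_degree
    (I Iperp : Ideal (MvPolynomial (Fin (n+1)) K))
    (hsat : SatIdeal I) (d e : ℕ)
    (hgen : GenInDegLE Iperp d)
    (hhigh : ∀ i : Fin (n+1), MvPolynomial.X i ^ (e+1) ∈ Iperp) :
    ∃ f, f ∈ homogeneousSubmodule (Fin (n+1)) K d ∧ f ∈ Iperp ∧
      ∀ g, f * g ∈ I → g ∈ I := by
  classical
  haveI : Module.Finite (MvPolynomial (Fin (n+1)) K) (MvPolynomial (Fin (n+1)) K ⧸ I) :=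
    Module.Finite.of_surjective (Submodule.mkQ (I : Submodule _ _))
      (Submodule.mkQ_surjective _)
  set S := MvPolynomial (Fin (n+1)) K
  set A := associatedPrimes S (S ⧸ I) with hAdef
  have hA : A.Finite := associatedPrimes_finite
  -- every associated prime misses some variable
  have key1 : ∀ P ∈ A, ∃ i : Fin (n+1), MvPolynomial.X i ∉ P := by
    intro P hP
    have hP' : IsAssociatedPrime P (S ⧸ I) := hP
    obtain ⟨hPprime, x, hx⟩ := isAssociatedPrime_iff.mp hP'
    obtain ⟨g, rfl⟩ := Submodule.Quotient.mk_surjective (I : Submodule S S) x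
    by_contra hcon
    push_neg at hcon
    have hg : g ∈ I := by
      apply hsat
      intro i
      have hXi := hcon i
      rw [hx, Submodule.mem_colon_singleton, Submodule.mem_bot] at hXi
      have : Submodule.Quotient.mk (p := (I : Submodule S S)) (MvPolynomial.X i * g) = 0 := by
        rw [← hXi]; rfl
      rwa [Submodule.Quotient.mk_eq_zero] at this
    have hx0 : Submodule.Quotient.mk (p := (I : Submodule S S)) g = 0 :=
      (Submodule.Quotient.mk_eq_zero _).mpr hg
    rw [hx0, Submodule.colon_singleton_zero] at hx
    exact hPprime.ne_top hx
  set V : Submodule K S :=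
    (homogeneousSubmodule (Fin (n+1)) K d) ⊓ (Iperp.restrictScalars K) with hVdef
  obtain ⟨G, hGspan, hGdeg⟩ := hgen
  -- V is not contained in any associated prime
  have key2 : ∀ P ∈ A, ∃ f0, f0 ∈ V ∧ f0 ∉ P := by
    intro P hP
    obtain ⟨i, hXi⟩ := key1 P hP
    have hPprime : P.IsPrime := hP.1
    by_contra hcon
    push_neg at hcon
    have hVP : ∀ f0 ∈ V, f0 ∈ P := fun f0 h => hcon f0 h
    have hIperpP : Iperp ≤ P := by
      rw [hGspan, Ideal.span_le]
      intro g hg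
      obtain ⟨k, hkd, hk⟩ := hGdeg g hg
      have hmul : MvPolynomial.X i ^ (d - k) * g ∈ P := by
        apply hVP
        rw [hVdef]
        constructor
        · rw [SetLike.mem_coe, mem_homogeneousSubmodule]
          have := ((MvPolynomial.isHomogeneous_X K i).pow (d - k)).mul
            ((mem_homogeneousSubmodule _ _).mp hk)
          have heq : 1 * (d - k) + k = d := by omega
          rwa [heq] at this
        · have : g ∈ Iperp := by rw [hGspan]; exact Ideal.subset_span hg
          exact Ideal.mul_mem_left _ _ this
      rcases hPprime.mem_or_mem hmul with h | h
      · exact absurd (hPprime.mem_of_pow_mem _ h) hXi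
      · exact h
    exact hXi (hPprime.mem_of_pow_mem _ (hIperpP (hhigh i)))
  -- avoid all associated primes
  set T : Finset (Submodule K S) :=
    hA.toFinset.image (fun P => P.restrictScalars K) with hTdef
  have hT : ∀ W ∈ T, ¬ V ≤ W := by
    intro W hW
    rw [hTdef, Finset.mem_image] at hW
    obtain ⟨P, hPA, rfl⟩ := hW
    rw [Set.Finite.mem_toFinset] at hPA
    obtain ⟨f0, hf0V, hf0P⟩ := key2 P hPA
    intro hle
    exact hf0P (hle hf0V)
  obtain ⟨f, hfV, hf⟩ := subspace_avoid V T hT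
  refine ⟨f, hfV.1, hfV.2, ?_⟩
  intro g hfg
  by_contra hgI
  have hx0 : Submodule.Quotient.mk (p := (I : Submodule S S)) g ≠ 0 := by
    rw [Ne, Submodule.Quotient.mk_eq_zero]
    exact hgI
  obtain ⟨P, hPass, hannP⟩ := exists_le_isAssociatedPrime_of_isNoetherianRing S _ hx0
  have hfP : f ∈ P := by
    apply hannP
    rw [Submodule.mem_colon_singleton, Submodule.mem_bot]
    have : f • (Submodule.Quotient.mk (p := (I : Submodule S S)) g) =
        Submodule.Quotient.mk (p := (I : Submodule S S)) (f * g) := rfl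
    rw [this, Submodule.Quotient.mk_eq_zero]
    exact hfg
  have hWT : P.restrictScalars K ∈ T := by
    rw [hTdef, Finset.mem_image]
    exact ⟨P, (Set.Finite.mem_toFinset hA).mpr hPass, rfl⟩
  exact hf _ hWT hfP

end RegularElement


section DegreeIneq
variable {n : ℕ} {K : Type*} [Field K]

/-- surjection between degree-t quotients from an inclusion of ideals -/
lemma hilb_le_of_le {I J : Ideal (MvPolynomial (Fin n) K)} (hIJ : I ≤ J) (t : ℕ) :
    hilb K J t ≤ hilb K I t := by
  classical
  set U := Submodule.comap (homogeneousSubmodule (Fin n) K t).subtype (I.restrictScalars K)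
  set W := Submodule.comap (homogeneousSubmodule (Fin n) K t).subtype (J.restrictScalars K)
  have hUW : U ≤ Submodule.comap LinearMap.id W := fun x hx => hIJ hx
  set π := Submodule.mapQ U W LinearMap.id hUW
  have hsurj : Function.Surjective π := by
    intro y
    obtain ⟨x, rfl⟩ := Submodule.Quotient.mk_surjective _ y
    exact ⟨Submodule.Quotient.mk x, by rw [Submodule.mapQ_apply]; rfl⟩
  have := LinearMap.finrank_range_le π
  rwa [LinearMap.range_eq_top.mpr hsurj, finrank_top] at this

/-- multiplication by a homogeneous `f` of degree `d`, as a map on graded pieces -/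
noncomputable def mulHomog (f : MvPolynomial (Fin n) K) (d t : ℕ)
    (hf : f ∈ homogeneousSubmodule (Fin n) K d) :
    ↥(homogeneousSubmodule (Fin n) K t) →ₗ[K] ↥(homogeneousSubmodule (Fin n) K (t + d)) :=
  LinearMap.codRestrict _ ((LinearMap.mulLeft K f) ∘ₗ (homogeneousSubmodule (Fin n) K t).subtype)
    (fun g => by
      have := ((mem_homogeneousSubmodule _ _).mp hf).mul ((mem_homogeneousSubmodule _ _).mp g.2)
      rw [mem_homogeneousSubmodule]
      rw [Nat.add_comm t d]
      exact this)

lemma mulHomog_coe (f : MvPolynomial (Fin n) K) (d t : ℕ)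
    (hf : f ∈ homogeneousSubmodule (Fin n) K d) (g : ↥(homogeneousSubmodule (Fin n) K t)) :
    (mulHomog f d t hf g : MvPolynomial (Fin n) K) = f * g := rfl

lemma hilb_step (I : Ideal (MvPolynomial (Fin n) K)) (f : MvPolynomial (Fin n) K) (d : ℕ)
    (hf : f ∈ homogeneousSubmodule (Fin n) K d)
    (hreg : ∀ g, f * g ∈ I → g ∈ I) (t : ℕ) : hilb K I t ≤ hilb K I (t + d) := by
  classical
  set U := Submodule.comap (homogeneousSubmodule (Fin n) K t).subtype (I.restrictScalars K)
  set W := Submodule.comap (homogeneousSubmodule (Fin n) K (t + d)).subtype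
    (I.restrictScalars K)
  have hcond : U ≤ Submodule.comap (mulHomog f d t hf) W := by
    intro x hx
    simp only [Submodule.mem_comap, Submodule.restrictScalars_mem, W, U] at hx ⊢
    rw [Submodule.subtype_apply, mulHomog_coe]
    exact Ideal.mul_mem_left _ _ hx
  set μ := Submodule.mapQ U W (mulHomog f d t hf) hcond
  have hinj : Function.Injective μ := by
    rw [← LinearMap.ker_eq_bot, eq_bot_iff]
    intro x hx
    obtain ⟨g, rfl⟩ := Submodule.Quotient.mk_surjective _ x
    rw [LinearMap.mem_ker, Submodule.mapQ_apply, Submodule.Quotient.mk_eq_zero] at hx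
    simp only [Submodule.mem_comap, Submodule.restrictScalars_mem, W] at hx
    rw [Submodule.subtype_apply, mulHomog_coe] at hx
    have hgI := hreg _ hx
    rw [Submodule.mem_bot, Submodule.Quotient.mk_eq_zero]
    simp only [Submodule.mem_comap, Submodule.restrictScalars_mem, U]
    exact hgI
  exact LinearMap.finrank_le_finrank_of_injective hinj

lemma hilb_step2 (I Iperp : Ideal (MvPolynomial (Fin n) K)) (hIJ : I ≤ Iperp)
    (f : MvPolynomial (Fin n) K) (d : ℕ)
    (hf : f ∈ homogeneousSubmodule (Fin n) K d) (hfIp : f ∈ Iperp)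
    (hreg : ∀ g, f * g ∈ I → g ∈ I) (t : ℕ) :
    hilb K I t + hilb K Iperp (t + d) ≤ hilb K I (t + d) := by
  classical
  set U := Submodule.comap (homogeneousSubmodule (Fin n) K t).subtype (I.restrictScalars K)
  set W := Submodule.comap (homogeneousSubmodule (Fin n) K (t + d)).subtype
    (I.restrictScalars K)
  set W' := Submodule.comap (homogeneousSubmodule (Fin n) K (t + d)).subtype
    (Iperp.restrictScalars K)
  have hWW' : W ≤ Submodule.comap LinearMap.id W' := fun x hx => hIJ hx
  set π := Submodule.mapQ W W' LinearMap.id hWW'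
  have hπsurj : Function.Surjective π := by
    intro y
    obtain ⟨x, rfl⟩ := Submodule.Quotient.mk_surjective _ y
    exact ⟨Submodule.Quotient.mk x, by rw [Submodule.mapQ_apply]; rfl⟩
  have hcond : U ≤ Submodule.comap (mulHomog f d t hf) W := by
    intro x hx
    simp only [Submodule.mem_comap, Submodule.restrictScalars_mem, W, U] at hx ⊢
    rw [Submodule.subtype_apply, mulHomog_coe]
    exact Ideal.mul_mem_left _ _ hx
  set μ := Submodule.mapQ U W (mulHomog f d t hf) hcond
  have hμker : ∀ x, μ x ∈ LinearMap.ker π := by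
    intro x
    obtain ⟨g, rfl⟩ := Submodule.Quotient.mk_surjective _ x
    rw [LinearMap.mem_ker, Submodule.mapQ_apply, Submodule.mapQ_apply]
    rw [Submodule.Quotient.mk_eq_zero]
    simp only [Submodule.mem_comap, Submodule.restrictScalars_mem, W', LinearMap.id_coe, id_eq]
    rw [Submodule.subtype_apply, mulHomog_coe]
    exact Ideal.mul_mem_right _ _ hfIp
  set μ' : (↥(homogeneousSubmodule (Fin n) K t) ⧸ U) →ₗ[K] ↥(LinearMap.ker π) :=
    LinearMap.codRestrict _ μ hμker
  have hμ'inj : Function.Injective μ' := by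
    intro x y hxy
    have hμxy : μ x = μ y := congrArg Subtype.val hxy
    obtain ⟨g, rfl⟩ := Submodule.Quotient.mk_surjective _ x
    obtain ⟨h, rfl⟩ := Submodule.Quotient.mk_surjective _ y
    rw [Submodule.mapQ_apply, Submodule.mapQ_apply, Submodule.Quotient.eq] at hμxy
    simp only [Submodule.mem_comap, Submodule.restrictScalars_mem, W] at hμxy
    rw [Submodule.Quotient.eq]
    simp only [Submodule.mem_comap, Submodule.restrictScalars_mem, U]
    have hsub : (mulHomog f d t hf) g - (mulHomog f d t hf) h =
        (mulHomog f d t hf) (g - h) := (map_sub _ _ _).symm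
    rw [hsub] at hμxy
    have : (mulHomog f d t hf (g - h) : MvPolynomial (Fin n) K) ∈ I := hμxy
    rw [mulHomog_coe] at this
    have := hreg _ this
    simpa using this
  have h1 : hilb K I t ≤ Module.finrank K ↥(LinearMap.ker π) :=
    LinearMap.finrank_le_finrank_of_injective hμ'inj
  have h2 := LinearMap.finrank_range_add_finrank_ker π
  rw [LinearMap.range_eq_top.mpr hπsurj, finrank_top] at h2
  have : hilb K Iperp (t+d) + Module.finrank K ↥(LinearMap.ker π) = hilb K I (t+d) := h2
  omega

end DegreeIneq

section Summation

lemma sum_window_bound (a b : ℕ → ℕ) (d : ℕ) (hd : 1 ≤ d)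
    (h1 : ∀ t, a t ≤ b t)
    (h2 : ∀ m, d ≤ m → b (m - d) + a m ≤ b m) :
    ∀ m, ∑ t ∈ Finset.range (m+1), a t ≤ ∑ j ∈ Finset.Ico (m+1-d) (m+1), b j := by
  intro m
  induction m with
  | zero =>
      have h0 : 1 - d = 0 := by omega
      rw [h0]
      simpa using h1 0
  | succ m ih =>
      by_cases hdm : d ≤ m + 1
      · rw [Finset.sum_range_succ]
        have hlt : m + 1 - d < m + 1 := by omega
        have hbot : ∑ j ∈ Finset.Ico (m+1-d) (m+1), b j =
            b (m+1-d) + ∑ j ∈ Finset.Ico (m+1-d+1) (m+1), b j :=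
          Finset.sum_eq_sum_Ico_succ_bot hlt b
        have heq1 : m + 1 - d + 1 = m + 2 - d := by omega
        have htop : ∑ j ∈ Finset.Ico (m+2-d) (m+2), b j =
            (∑ j ∈ Finset.Ico (m+2-d) (m+1), b j) + b (m+1) := by
          have : m + 2 - d ≤ m + 1 := by omega
          exact Finset.sum_Ico_succ_top this b
        calc (∑ t ∈ Finset.range (m+1), a t) + a (m+1)
            ≤ (∑ j ∈ Finset.Ico (m+1-d) (m+1), b j) + a (m+1) := by
              exact Nat.add_le_add_right ih _
          _ = b (m+1-d) + (∑ j ∈ Finset.Ico (m+2-d) (m+1), b j) + a (m+1) := by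
              rw [hbot, heq1]
          _ = (∑ j ∈ Finset.Ico (m+2-d) (m+1), b j) + (b ((m+1)-d) + a (m+1)) := by ring
          _ ≤ (∑ j ∈ Finset.Ico (m+2-d) (m+1), b j) + b (m+1) :=
              Nat.add_le_add_left (h2 (m+1) hdm) _
          _ = ∑ j ∈ Finset.Ico (m+2-d) (m+2), b j := htop.symm
      · have h0 : m + 2 - d = 0 := by omega
        rw [h0]
        have : Finset.Ico 0 (m+2) = Finset.range (m+2) := by
          rw [Finset.range_eq_Ico]
        rw [this]
        exact Finset.sum_le_sum (fun t _ => h1 t)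

end Summation

/-- If `F^⊥` is generated in degrees `≤ d` and `Γ` is a finite subscheme
of `Pⁿ` (of degree `D`) apolar to `F`, then `d · D ≥ dim_K S/F^⊥`. -/
theorem apolar_scheme_degree_lower_bound {K : Type*} [Field K] [IsAlgClosed K] [CharZero K]
    {n e : ℕ} (F : MvPolynomial (Fin (n + 1)) K) (hFhom : F.IsHomogeneous e)
    (d : ℕ) (Iperp : Ideal (MvPolynomial (Fin (n + 1)) K))
    (hIperp : (↑Iperp : Set (MvPolynomial (Fin (n + 1)) K)) = perp F)
    (hgen : GenInDegLE Iperp d)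
    (I : Ideal (MvPolynomial (Fin (n + 1)) K)) (hhom : HomogIdeal I) (hsat : SatIdeal I)
    (hapolar : (↑I : Set (MvPolynomial (Fin (n + 1)) K)) ⊆ perp F)
    (D : ℕ) (hD : FiniteSchemeDeg K I D) :
    Module.finrank K (MvPolynomial (Fin (n + 1)) K ⧸ Iperp) ≤ d * D := by
  classical
  have hmemIperp : ∀ g, g ∈ Iperp ↔ g ∈ perp F := by
    intro g
    rw [← hIperp]
    rfl
  obtain ⟨G, hGspan, hGdeg⟩ := hgen
  have hhigh : ∀ t g, e < t → g ∈ homogeneousSubmodule (Fin (n+1)) K t → g ∈ Iperp := by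
    intro t g ht hg
    rw [hmemIperp]
    exact mem_perp_of_isHomogeneous_gt hFhom ht ((mem_homogeneousSubmodule _ _).mp hg)
  have hXpow : ∀ i : Fin (n+1), X i ^ (e+1) ∈ Iperp := by
    intro i
    apply hhigh (e+1) _ (by omega)
    rw [mem_homogeneousSubmodule]
    have := (isHomogeneous_X K i).pow (e+1)
    rwa [one_mul] at this
  rcases Nat.eq_zero_or_pos d with rfl | hd
  · -- degenerate case : `Iperp` is generated by constants, hence is the unit ideal
    have htop : Iperp = ⊤ := by
      by_contra hne
      have hG0 : ∀ g ∈ G, g = 0 := by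
        intro g hg
        obtain ⟨k, hk0, hk⟩ := hGdeg g hg
        have hk00 : k = 0 := by omega
        subst hk00
        by_contra hg0
        have hhom : g.IsHomogeneous 0 := (mem_homogeneousSubmodule _ _).mp hk
        have hsup : g.support ⊆ {0} := by
          intro v hv
          have hv0 : v.degree = 0 := by
            rw [Finsupp.degree_eq_weight_one]
            exact hhom (MvPolynomial.mem_support_iff.mp hv)
          rw [Finset.mem_singleton]
          exact (Finsupp.degree_eq_zero_iff v).mp hv0
        rcases Finset.subset_singleton_iff.mp hsup with h | h
        · exact hg0 (MvPolynomial.support_eq_empty.mp h)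
        · have hgC0 : g = MvPolynomial.C (MvPolynomial.coeff 0 g) := by
            conv_lhs => rw [← support_sum_monomial_coeff g, h]
            rw [Finset.sum_singleton, MvPolynomial.C_apply]
          have hc0 : MvPolynomial.coeff 0 g ≠ 0 := by
            intro h0
            rw [hgC0, h0, map_zero] at hg0
            exact hg0 rfl
          obtain ⟨c, hc, hgC⟩ : ∃ c : K, c ≠ 0 ∧ g = MvPolynomial.C c :=
            ⟨MvPolynomial.coeff 0 g, hc0, hgC0⟩
          have hgI : g ∈ Iperp := by
            rw [hGspan]
            exact Ideal.subset_span hg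
          have hmul := Ideal.mul_mem_left Iperp (MvPolynomial.C c⁻¹) hgI
          rw [hgC, ← map_mul, inv_mul_cancel₀ hc, map_one] at hmul
          exact hne ((Ideal.eq_top_iff_one _).mpr hmul)
      have hbot : Iperp ≤ ⊥ := by
        rw [hGspan, Ideal.span_le]
        intro g hg
        simp [hG0 g hg]
      have hx := hbot (hXpow 0)
      rw [Ideal.mem_bot] at hx
      exact pow_ne_zero _ (MvPolynomial.X_ne_zero (R := K) 0) hx
    haveI : Subsingleton (MvPolynomial (Fin (n+1)) K ⧸ Iperp) :=
      Submodule.Quotient.subsingleton_iff.mpr (by rw [htop])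
    rw [Module.finrank_zero_of_subsingleton]
    exact Nat.zero_le _
  · -- main case
    have hIle : I ≤ Iperp := fun g hgI => (hmemIperp g).mpr (hapolar hgI)
    have hHomog : HomogIdeal Iperp := by
      rw [hGspan]
      exact homogIdeal_span G (fun g hg => (hGdeg g hg).imp (fun k hk => hk.2))
    have hdecomp := finrank_quotient_eq_sum_hilb Iperp hHomog e hhigh
    obtain ⟨f, hfhom, hfIp, hreg⟩ :=
      exists_regular_in_degree I Iperp hsat d e ⟨G, hGspan, hGdeg⟩ hXpow
    have h1 : ∀ t, hilb K Iperp t ≤ hilb K I t := fun t => hilb_le_of_le hIle t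
    have h2 : ∀ m, d ≤ m → hilb K I (m - d) + hilb K Iperp m ≤ hilb K I m := by
      intro m hm
      have := hilb_step2 I Iperp hIle f d hfhom hfIp hreg (m - d)
      rwa [Nat.sub_add_cancel hm] at this
    have h3 : ∀ t, hilb K I t ≤ hilb K I (t + d) := hilb_step I f d hfhom hreg
    obtain ⟨N, hN⟩ := hD
    have hbD : ∀ t, hilb K I t ≤ D := by
      intro t
      have hle : ∀ k : ℕ, hilb K I t ≤ hilb K I (t + k * d) := by
        intro k
        induction k with
        | zero => simp
        | succ k ih =>
            have heq : t + k * d + d = t + (k+1) * d := by ring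
            exact le_trans ih (le_trans (h3 (t + k * d)) (le_of_eq (by rw [heq])))
      have hfin := hle N
      have hNd : N ≤ N * d := Nat.le_mul_of_pos_right N hd
      rw [hN (t + N * d) (by omega)] at hfin
      exact hfin
    rw [hdecomp]
    have hsum := sum_window_bound (fun t => hilb K Iperp t) (fun t => hilb K I t) d hd h1 h2 e
    have hcard : ∑ j ∈ Finset.Ico (e+1-d) (e+1), hilb K I j ≤ d * D := by
      calc ∑ j ∈ Finset.Ico (e+1-d) (e+1), hilb K I j
          ≤ ∑ _j ∈ Finset.Ico (e+1-d) (e+1), D := Finset.sum_le_sum (fun j _ => hbD j)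
        _ = (Finset.Ico (e+1-d) (e+1)).card * D := by rw [Finset.sum_const, smul_eq_mul]
        _ ≤ d * D := Nat.mul_le_mul_right D (by rw [Nat.card_Ico]; omega)
    exact le_trans hsum hcard
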